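/- Balance of mass and energy for the semi-discretization (Lemma 4.3): Let (ρ_h, m_h) be a semi-discrete solution on [0,T]. Then for every t ∈ [0,T]: d/dt Σ_e ∫_0^{ℓ_e} ρ_h(t,x) dx = 0, and d/dt Σ_e ∫_0^{ℓ_e} ( m_h(t,x)²/(2ρ_h(t,x)) + P(ρ_h(t,x)) ) dx + Σ_e ∫_0^{ℓ_e} ( a_e |∂_x m_h(t,x)|²/ρ_h(t,x)² + b_e |m_h(t,x)|³/ρ_h(t,x)² ) dx = 0, where P = P_e on edge e. -/

import Mathlib

/-- The network pairing `(u, w)_E = Σ_{e∈E} ∫_0^{ℓ_e} u_e w_e dx` of two families of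
functions on the edges of a pipe network. -/
noncomputable def pairE {E : Type} [Fintype E] (ℓ : E → ℝ) (u w : E → ℝ → ℝ) : ℝ :=
  ∑ e, ∫ x in (0 : ℝ)..(ℓ e), u e x * w e x

/-- `q` is piecewise constant on the uniform mesh of `[0, ℓ e]` into `N e` subintervals,
for every edge `e`.  This is the space `Q_h` of the mixed finite element method
(the value at the right endpoint `ℓ e` is irrelevant). -/
def IsPwConst {E : Type} (N : E → ℕ) (ℓ : E → ℝ) (q : E → ℝ → ℝ) : Prop :=
  ∀ e, ∀ i : ℕ, i < N e →
    ∀ x ∈ Set.Ico ((i : ℝ) * ℓ e / (N e : ℝ)) (((i : ℝ) + 1) * ℓ e / (N e : ℝ)),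
      q e x = q e ((i : ℝ) * ℓ e / (N e : ℝ))

/-- `v` is continuous on `[0, ℓ e]` and affine on each subinterval of the uniform mesh
of `[0, ℓ e]` into `N e` subintervals, for every edge `e`. -/
def IsPwAffine {E : Type} (N : E → ℕ) (ℓ : E → ℝ) (v : E → ℝ → ℝ) : Prop :=
  (∀ e, ContinuousOn (v e) (Set.Icc 0 (ℓ e))) ∧
  (∀ e, ∀ i : ℕ, i < N e → ∃ α β : ℝ,
    ∀ x ∈ Set.Icc ((i : ℝ) * ℓ e / (N e : ℝ)) (((i : ℝ) + 1) * ℓ e / (N e : ℝ)),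
      v e x = α * x + β)

/-- The vertex sum `Σ_{e∈E(w)} f_e(w) n_e(w)` at a vertex `w`, where `n_e(w) = -1` if
`w` is the initial vertex `src e`, `n_e(w) = +1` if `w` is the terminal vertex `dst e`,
and a function `f_e` is evaluated at `src e` as `f e 0` and at `dst e` as `f e (ℓ e)`. -/
noncomputable def vtxSum {V E : Type} [Fintype E] [DecidableEq V]
    (src dst : E → V) (ℓ : E → ℝ) (f : E → ℝ → ℝ) (w : V) : ℝ :=
  ∑ e, ((if dst e = w then f e (ℓ e) else 0) - (if src e = w then f e 0 else 0))

/-- The space `V_h`: continuous piecewise affine families that satisfy the conservative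
coupling condition `Σ_{e∈E(w)} v_e(w) n_e(w) = 0` at every vertex `w`. -/
def InVh {V E : Type} [Fintype E] [DecidableEq V]
    (src dst : E → V) (N : E → ℕ) (ℓ : E → ℝ) (v : E → ℝ → ℝ) : Prop :=
  IsPwAffine N ℓ v ∧ ∀ w : V, vtxSum src dst ℓ v w = 0

/-- The subinterval-wise (broken) spatial derivative of a piecewise affine family `v`:
on the subinterval of the mesh containing `x`, it is the slope of `v e` there. -/
noncomputable def Dx {E : Type} (N : E → ℕ) (ℓ : E → ℝ) (v : E → ℝ → ℝ)
    (e : E) (x : ℝ) : ℝ :=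
  let i : ℕ := min (N e - 1) ⌊x * (N e : ℝ) / ℓ e⌋₊
  (v e (((i : ℝ) + 1) * ℓ e / (N e : ℝ)) - v e ((i : ℝ) * ℓ e / (N e : ℝ)))
    * ((N e : ℝ) / ℓ e)

/-- The two variational equations of the semi-discrete (Galerkin) problem
(Problem 4.2) at a fixed time, for state `(ρ, m)` with time derivatives `(ρt, mt)`:
for all `q_h ∈ Q_h` and all `v_h ∈ V_h`,
`(∂ₜ ρ_h, q_h)_E = -(∂ₓ m_h, q_h)_E` and
`((1/ρ_h) ∂ₜ m_h - (m_h/(2ρ_h²)) ∂ₜ ρ_h, v_h)_E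
   = ( m_h²/(2ρ_h²) + P'(ρ_h) - (a/ρ_h²) ∂ₓ m_h, ∂ₓ v_h )_E
     - ( (m_h/(2ρ_h²)) ∂ₓ m_h + b |m_h| m_h/ρ_h², v_h )_E`,
with `P_e'(ρ) = c_e γ/(γ-1) ρ^(γ-1)` on edge `e`. -/
def SemiDiscEqs {V E : Type} [Fintype V] [Fintype E] [DecidableEq V]
    (src dst : E → V) (N : E → ℕ) (ℓ : E → ℝ) (γ : ℝ) (a b c : E → ℝ)
    (ρ m ρt mt : E → ℝ → ℝ) : Prop :=
  (∀ q : E → ℝ → ℝ, IsPwConst N ℓ q →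
      pairE ℓ ρt q = -pairE ℓ (Dx N ℓ m) q) ∧
  (∀ v : E → ℝ → ℝ, InVh src dst N ℓ v →
      pairE ℓ (fun e x => (1 / ρ e x) * mt e x - m e x / (2 * ρ e x ^ 2) * ρt e x) v
        = pairE ℓ (fun e x => m e x ^ 2 / (2 * ρ e x ^ 2)
              + c e * γ / (γ - 1) * ρ e x ^ (γ - 1)
              - a e / ρ e x ^ 2 * Dx N ℓ m e x) (Dx N ℓ v)
          - pairE ℓ (fun e x => m e x / (2 * ρ e x ^ 2) * Dx N ℓ m e x
              + b e * |m e x| * m e x / ρ e x ^ 2) v)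

/-- A semi-discrete solution of the Galerkin approximation on the time set `S`:
a continuously differentiable map `t ↦ (ρh t, mh t) ∈ Q_h × V_h` (with time
derivatives `ρht`, `mht`) with everywhere positive density, satisfying the
semi-discrete variational equations for every `t ∈ S`. -/
def IsSemiDiscSol {V E : Type} [Fintype V] [Fintype E] [DecidableEq V]
    (src dst : E → V) (N : E → ℕ) (ℓ : E → ℝ) (γ : ℝ) (a b c : E → ℝ)
    (S : Set ℝ) (ρh mh ρht mht : ℝ → E → ℝ → ℝ) : Prop :=
  (∀ t ∈ S, IsPwConst N ℓ (ρh t) ∧ InVh src dst N ℓ (mh t)) ∧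
  (∀ t ∈ S, ∀ e, ∀ x ∈ Set.Icc 0 (ℓ e), 0 < ρh t e x) ∧
  (∀ t ∈ S, ∀ e x,
      HasDerivWithinAt (fun s => ρh s e x) (ρht t e x) S t ∧
      HasDerivWithinAt (fun s => mh s e x) (mht t e x) S t) ∧
  (∀ e x, ContinuousOn (fun t => ρht t e x) S) ∧
  (∀ e x, ContinuousOn (fun t => mht t e x) S) ∧
  (∀ t ∈ S, SemiDiscEqs src dst N ℓ γ a b c (ρh t) (mh t) (ρht t) (mht t))

/-!
On each mesh cell the density is constant and the momentum affine in `x`, so the mass and energy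
densities are quadratic polynomials in `x`. Milne's rule integrates quadratics exactly from three
interior nodes; hence the time derivative passes under the integral sign as soon as the densities
are differentiable pointwise, and the three-point interpolation formula together with uniqueness
of derivatives shows that these pointwise time derivatives are again cellwise quadratic.

Testing the continuity equation with `q_h = 1`, the flux `∫ ∂ₓ m_h` telescopes to a sum of
vertex terms that vanishes by the coupling condition on `m_h`: this is conservation of mass.
Testing the momentum equation with `v_h = m_h` and the continuity equation with
`q_h = P'(ρ_h)`, the convective terms cancel pointwise and only the dissipation remains.
-/

open MeasureTheory Set

section Cells

variable {a : ℕ → ℝ} {n : ℕ} {f g : ℝ → ℝ}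

def CellwiseContinuous (a : ℕ → ℝ) (n : ℕ) (f : ℝ → ℝ) : Prop :=
  ∀ i < n, ∃ g : ℝ → ℝ, Continuous g ∧ EqOn f g (Ioo (a i) (a (i + 1)))

def CellwiseConst (a : ℕ → ℝ) (n : ℕ) (f : ℝ → ℝ) : Prop :=
  ∀ i < n, ∃ c : ℝ, EqOn f (fun _ => c) (Ioo (a i) (a (i + 1)))

theorem CellwiseConst.comp (hf : CellwiseConst a n f) (Φ : ℝ → ℝ) :
    CellwiseConst a n (fun x => Φ (f x)) := fun i hi => by
  obtain ⟨c, hc⟩ := hf i hi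
  exact ⟨Φ c, fun x hx => by simp only [hc hx]⟩

theorem CellwiseConst.cellwiseContinuous (hf : CellwiseConst a n f) :
    CellwiseContinuous a n f := fun i hi => by
  obtain ⟨c, hc⟩ := hf i hi
  exact ⟨fun _ => c, continuous_const, hc⟩

namespace CellwiseContinuous

theorem comp₂ (hf : CellwiseContinuous a n f) (hg : CellwiseContinuous a n g)
    {Φ : ℝ → ℝ → ℝ} (hΦ : Continuous (Function.uncurry Φ)) :
    CellwiseContinuous a n (fun x => Φ (f x) (g x)) := fun i hi => by
  obtain ⟨f', hf', hff'⟩ := hf i hi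
  obtain ⟨g', hg', hgg'⟩ := hg i hi
  exact ⟨fun x => Φ (f' x) (g' x), hΦ.comp (hf'.prodMk hg'),
    fun x hx => by simp only [hff' hx, hgg' hx]⟩

theorem add (hf : CellwiseContinuous a n f) (hg : CellwiseContinuous a n g) :
    CellwiseContinuous a n (fun x => f x + g x) :=
  hf.comp₂ hg continuous_add

theorem sub (hf : CellwiseContinuous a n f) (hg : CellwiseContinuous a n g) :
    CellwiseContinuous a n (fun x => f x - g x) :=
  hf.comp₂ hg continuous_sub

theorem mul (hf : CellwiseContinuous a n f) (hg : CellwiseContinuous a n g) :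
    CellwiseContinuous a n (fun x => f x * g x) :=
  hf.comp₂ hg continuous_mul

theorem div (hf : CellwiseContinuous a n f) (hg : CellwiseConst a n g) :
    CellwiseContinuous a n (fun x => f x / g x) := fun i hi => by
  obtain ⟨f', hf', hff'⟩ := hf i hi
  obtain ⟨c, hc⟩ := hg i hi
  exact ⟨fun x => f' x / c, hf'.div_const c, fun x hx => by simp only [hff' hx, hc hx]⟩

theorem comp (hf : CellwiseContinuous a n f) {Φ : ℝ → ℝ} (hΦ : Continuous Φ) :
    CellwiseContinuous a n (fun x => Φ (f x)) := fun i hi => by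
  obtain ⟨f', hf', hff'⟩ := hf i hi
  exact ⟨fun x => Φ (f' x), hΦ.comp hf', fun x hx => by simp only [hff' hx]⟩

theorem intervalIntegrable_cell (ha : Monotone a) (hf : CellwiseContinuous a n f) {i : ℕ}
    (hi : i < n) : IntervalIntegrable f volume (a i) (a (i + 1)) := by
  obtain ⟨g, hg, hfg⟩ := hf i hi
  rw [intervalIntegrable_congr_uIoo (uIoo_of_le (ha i.le_succ) ▸ hfg)]
  exact hg.intervalIntegrable _ _

theorem intervalIntegrable (ha : Monotone a) (hf : CellwiseContinuous a n f) :
    IntervalIntegrable f volume (a 0) (a n) :=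
  IntervalIntegrable.trans_iterate fun _ hi => hf.intervalIntegrable_cell ha hi

theorem integral_eq_sum (ha : Monotone a) (hf : CellwiseContinuous a n f) :
    ∫ x in a 0..a n, f x = ∑ i ∈ Finset.range n, ∫ x in a i..a (i + 1), f x :=
  (intervalIntegral.sum_integral_adjacent_intervals (a := a) (n := n)
    fun _ hi => hf.intervalIntegrable_cell ha hi).symm

end CellwiseContinuous

end Cells

section Quadratic

def IsQuadraticOn (f : ℝ → ℝ) (s : Set ℝ) : Prop :=
  ∃ A B C : ℝ, EqOn f (fun x => A + B * x + C * x ^ 2) s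

theorem IsQuadraticOn.of_eqOn_centered {f : ℝ → ℝ} {s : Set ℝ} (x₀ A B C : ℝ)
    (h : EqOn f (fun x => A + B * (x - x₀) + C * (x - x₀) ^ 2) s) : IsQuadraticOn f s :=
  ⟨A - B * x₀ + C * x₀ ^ 2, B - 2 * C * x₀, C, fun x hx => by rw [h hx]; ring⟩

theorem CellwiseContinuous.of_isQuadraticOn {a : ℕ → ℝ} {n : ℕ} {f : ℝ → ℝ}
    (hf : ∀ i < n, IsQuadraticOn f (Ioo (a i) (a (i + 1)))) : CellwiseContinuous a n f :=
  fun i hi => by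
  obtain ⟨A, B, C, h⟩ := hf i hi
  exact ⟨_, by fun_prop, h⟩

theorem quadratic_eq_interpolation (A B C x₀ δ x : ℝ) (hδ : δ ≠ 0) :
    let q : ℝ → ℝ := fun x => A + B * x + C * x ^ 2
    q x = q x₀ + (q (x₀ + δ) - q (x₀ - δ)) / (2 * δ) * (x - x₀)
      + (q (x₀ - δ) - 2 * q x₀ + q (x₀ + δ)) / (2 * δ ^ 2) * (x - x₀) ^ 2 := by
  intro q
  simp only [q]
  field_simp
  ring

noncomputable def milneRule (f : ℝ → ℝ) (u v : ℝ) : ℝ :=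
  (v - u) / 3 * (2 * f ((3 * u + v) / 4) - f ((u + v) / 2) + 2 * f ((u + 3 * v) / 4))

theorem integral_quadratic (A B C u v : ℝ) :
    ∫ x in u..v, (A + B * x + C * x ^ 2) = A * (v - u) + B * (v ^ 2 - u ^ 2) / 2
      + C * (v ^ 3 - u ^ 3) / 3 := by
  have hc : ∀ g : ℝ → ℝ, Continuous g → IntervalIntegrable g volume u v :=
    fun g hg => hg.intervalIntegrable u v
  rw [intervalIntegral.integral_add (hc _ (by fun_prop)) (hc _ (by fun_prop)),
    intervalIntegral.integral_add (hc _ (by fun_prop)) (hc _ (by fun_prop)),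
    intervalIntegral.integral_const,
    intervalIntegral.integral_const_mul, intervalIntegral.integral_const_mul, integral_id,
    integral_pow]
  simp only [smul_eq_mul]
  push_cast
  ring

theorem integral_eq_milneRule {f : ℝ → ℝ} {u v : ℝ} (huv : u < v)
    (hf : IsQuadraticOn f (Ioo u v)) : ∫ x in u..v, f x = milneRule f u v := by
  obtain ⟨A, B, C, h⟩ := hf
  have h₁ : (3 * u + v) / 4 ∈ Ioo u v := by constructor <;> linarith
  have h₂ : (u + v) / 2 ∈ Ioo u v := by constructor <;> linarith
  have h₃ : (u + 3 * v) / 4 ∈ Ioo u v := by constructor <;> linarith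
  rw [intervalIntegral.integral_congr_Ioo_of_le huv.le h, integral_quadratic, milneRule, h h₁,
    h h₂, h h₃]
  ring

theorem CellwiseConst.isQuadraticOn {a : ℕ → ℝ} {n : ℕ} {f : ℝ → ℝ}
    (hf : CellwiseConst a n f) {i : ℕ} (hi : i < n) :
    IsQuadraticOn f (Ioo (a i) (a (i + 1))) := by
  obtain ⟨c, h⟩ := hf i hi
  exact ⟨c, 0, 0, fun x hx => by simp [h hx]⟩

end Quadratic

section Leibniz

variable {S : Set ℝ} {t u v : ℝ} {F : ℝ → ℝ → ℝ} {F' : ℝ → ℝ}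

theorem IsQuadraticOn.of_hasDerivWithinAt (hS : UniqueDiffWithinAt ℝ S t) (ht : t ∈ S)
    (huv : u < v) (hF : ∀ τ ∈ S, IsQuadraticOn (F τ) (Ioo u v))
    (hd : ∀ x ∈ Ioo u v, HasDerivWithinAt (fun τ => F τ x) (F' x) S t) :
    IsQuadraticOn F' (Ioo u v) := by
  set x₀ := (u + v) / 2 with hx₀
  set δ := (v - u) / 4 with hδ'
  have hδ : δ ≠ 0 := by linarith
  have hm : x₀ - δ ∈ Ioo u v := by constructor <;> linarith
  have h₀ : x₀ ∈ Ioo u v := by constructor <;> linarith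
  have hp : x₀ + δ ∈ Ioo u v := by constructor <;> linarith
  have hinterp : ∀ τ ∈ S, ∀ x ∈ Ioo u v, F τ x = F τ x₀
      + (F τ (x₀ + δ) - F τ (x₀ - δ)) / (2 * δ) * (x - x₀)
      + (F τ (x₀ - δ) - 2 * F τ x₀ + F τ (x₀ + δ)) / (2 * δ ^ 2) * (x - x₀) ^ 2 := by
    intro τ hτ x hx
    obtain ⟨A, B, C, h⟩ := hF τ hτ
    rw [h hx, h hm, h h₀, h hp]
    exact quadratic_eq_interpolation A B C x₀ δ x hδ
  refine .of_eqOn_centered x₀ (F' x₀) ((F' (x₀ + δ) - F' (x₀ - δ)) / (2 * δ))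
    ((F' (x₀ - δ) - 2 * F' x₀ + F' (x₀ + δ)) / (2 * δ ^ 2)) fun x hx => ?_
  have hder := ((hd _ h₀).add ((((hd _ hp).sub (hd _ hm)).div_const (2 * δ)).mul_const
    (x - x₀))).add (((((hd _ hm).sub ((hd _ h₀).const_mul 2)).add (hd _ hp)).div_const
    (2 * δ ^ 2)).mul_const ((x - x₀) ^ 2))
  exact hS.eq_deriv _ (hd x hx) (hder.congr_of_mem (fun τ hτ => hinterp τ hτ x hx) ht)

theorem hasDerivWithinAt_integral_of_isQuadraticOn (hS : UniqueDiffWithinAt ℝ S t)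
    (ht : t ∈ S) (huv : u < v) (hF : ∀ τ ∈ S, IsQuadraticOn (F τ) (Ioo u v))
    (hd : ∀ x ∈ Ioo u v, HasDerivWithinAt (fun τ => F τ x) (F' x) S t) :
    HasDerivWithinAt (fun τ => ∫ x in u..v, F τ x) (∫ x in u..v, F' x) S t := by
  have h₁ : (3 * u + v) / 4 ∈ Ioo u v := by constructor <;> linarith
  have h₂ : (u + v) / 2 ∈ Ioo u v := by constructor <;> linarith
  have h₃ : (u + 3 * v) / 4 ∈ Ioo u v := by constructor <;> linarith
  rw [integral_eq_milneRule huv (.of_hasDerivWithinAt hS ht huv hF hd)]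
  refine HasDerivWithinAt.congr_of_mem ?_ (fun τ hτ => integral_eq_milneRule huv (hF τ hτ)) ht
  exact ((((hd _ h₁).const_mul 2).sub (hd _ h₂)).add ((hd _ h₃).const_mul 2)).const_mul _

theorem hasDerivWithinAt_integral_of_cellwise_isQuadraticOn {a : ℕ → ℝ} {n : ℕ}
    (ha : StrictMono a) (hS : UniqueDiffWithinAt ℝ S t) (ht : t ∈ S)
    (hF : ∀ τ ∈ S, ∀ i < n, IsQuadraticOn (F τ) (Ioo (a i) (a (i + 1))))
    (hd : ∀ x ∈ Ioo (a 0) (a n), HasDerivWithinAt (fun τ => F τ x) (F' x) S t) :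
    HasDerivWithinAt (fun τ => ∫ x in a 0..a n, F τ x) (∫ x in a 0..a n, F' x) S t := by
  have hcell : ∀ i < n, Ioo (a i) (a (i + 1)) ⊆ Ioo (a 0) (a n) := fun i hi =>
    Ioo_subset_Ioo (ha.monotone i.zero_le) (ha.monotone hi)
  have hF' : ∀ i < n, IsQuadraticOn F' (Ioo (a i) (a (i + 1))) := fun i hi =>
    .of_hasDerivWithinAt hS ht (ha i.lt_succ_self) (fun τ hτ => hF τ hτ i hi)
      fun x hx => hd x (hcell i hi hx)
  rw [(CellwiseContinuous.of_isQuadraticOn hF').integral_eq_sum ha.monotone]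
  refine HasDerivWithinAt.congr_of_mem ?_ (fun τ hτ =>
    (CellwiseContinuous.of_isQuadraticOn (hF τ hτ)).integral_eq_sum ha.monotone) ht
  exact HasDerivWithinAt.fun_sum fun i hi => hasDerivWithinAt_integral_of_isQuadraticOn hS ht
    (ha i.lt_succ_self) (fun τ hτ => hF τ hτ i (Finset.mem_range.1 hi))
    fun x hx => hd x (hcell i (Finset.mem_range.1 hi) hx)

theorem CellwiseContinuous.of_hasDerivWithinAt {a : ℕ → ℝ} {n : ℕ} (ha : StrictMono a)
    (hS : UniqueDiffWithinAt ℝ S t) (ht : t ∈ S)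
    (hF : ∀ τ ∈ S, ∀ i < n, IsQuadraticOn (F τ) (Ioo (a i) (a (i + 1))))
    (hd : ∀ x, HasDerivWithinAt (fun τ => F τ x) (F' x) S t) : CellwiseContinuous a n F' :=
  of_isQuadraticOn fun i hi => .of_hasDerivWithinAt hS ht (ha i.lt_succ_self)
    (fun τ hτ => hF τ hτ i hi) fun x _ => hd x

end Leibniz

section UniformMesh

noncomputable def uniformMesh (N : ℕ) (ℓ : ℝ) (i : ℕ) : ℝ := i * ℓ / N

variable {N : ℕ} {ℓ : ℝ}

theorem uniformMesh_zero : uniformMesh N ℓ 0 = 0 := by simp [uniformMesh]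

theorem uniformMesh_self (hN : N ≠ 0) : uniformMesh N ℓ N = ℓ :=
  mul_div_cancel_left₀ ℓ (Nat.cast_ne_zero.2 hN)

theorem uniformMesh_succ (i : ℕ) : uniformMesh N ℓ (i + 1) = ((i : ℝ) + 1) * ℓ / N := by
  simp [uniformMesh]

theorem uniformMesh_succ_sub (i : ℕ) : uniformMesh N ℓ (i + 1) - uniformMesh N ℓ i = ℓ / N := by
  rw [uniformMesh_succ, uniformMesh]
  ring

theorem uniformMesh_strictMono (hN : 0 < N) (hℓ : 0 < ℓ) : StrictMono (uniformMesh N ℓ) :=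
  fun i j hij => by unfold uniformMesh; gcongr

end UniformMesh

theorem CellwiseContinuous.intervalIntegrable_uniformMesh {N : ℕ} {ℓ : ℝ} {f : ℝ → ℝ}
    (hN : 0 < N) (hℓ : 0 < ℓ) (hf : CellwiseContinuous (uniformMesh N ℓ) N f) :
    IntervalIntegrable f volume 0 ℓ := by
  simpa only [uniformMesh_zero, uniformMesh_self hN.ne'] using
    hf.intervalIntegrable (uniformMesh_strictMono hN hℓ).monotone

theorem hasDerivWithinAt_integral_of_uniformMesh {N : ℕ} {ℓ : ℝ} {S : Set ℝ} {t : ℝ}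
    {F : ℝ → ℝ → ℝ} {F' : ℝ → ℝ} (hN : 0 < N) (hℓ : 0 < ℓ)
    (hS : UniqueDiffWithinAt ℝ S t) (ht : t ∈ S)
    (hF : ∀ τ ∈ S, ∀ i < N,
      IsQuadraticOn (F τ) (Ioo (uniformMesh N ℓ i) (uniformMesh N ℓ (i + 1))))
    (hd : ∀ x ∈ Ioo 0 ℓ, HasDerivWithinAt (fun τ => F τ x) (F' x) S t) :
    HasDerivWithinAt (fun τ => ∫ x in 0..ℓ, F τ x) (∫ x in 0..ℓ, F' x) S t := by
  have := hasDerivWithinAt_integral_of_cellwise_isQuadraticOn (uniformMesh_strictMono hN hℓ)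
    hS ht hF (by rwa [uniformMesh_zero, uniformMesh_self hN.ne'])
  rwa [uniformMesh_zero, uniformMesh_self hN.ne'] at this

section Network

variable {E : Type} {N : E → ℕ} {ℓ : E → ℝ}

theorem IsPwConst.comp {q : E → ℝ → ℝ} (hq : IsPwConst N ℓ q) (Φ : E → ℝ → ℝ) :
    IsPwConst N ℓ (fun e x => Φ e (q e x)) :=
  fun e i hi x hx => by simp only [hq e i hi x hx]

theorem IsPwConst.cellwiseConst {q : E → ℝ → ℝ} (hq : IsPwConst N ℓ q) (e : E) :
    CellwiseConst (uniformMesh (N e) (ℓ e)) (N e) (q e) := fun i hi =>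
  ⟨_, fun x hx => hq e i hi x ⟨hx.1.le, uniformMesh_succ (N := N e) (ℓ := ℓ e) i ▸ hx.2⟩⟩

theorem IsPwAffine.eqOn_affine {v : E → ℝ → ℝ} (hv : IsPwAffine N ℓ v) (e : E) {i : ℕ}
    (hi : i < N e) : ∃ α β : ℝ, EqOn (v e) (fun x => α * x + β)
      (Ioo (uniformMesh (N e) (ℓ e) i) (uniformMesh (N e) (ℓ e) (i + 1))) := by
  obtain ⟨α, β, h⟩ := hv.2 e i hi
  exact ⟨α, β, fun x hx => h x ⟨hx.1.le, uniformMesh_succ (N := N e) (ℓ := ℓ e) i ▸ hx.2.le⟩⟩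

theorem IsPwAffine.cellwiseContinuous {v : E → ℝ → ℝ} (hv : IsPwAffine N ℓ v) (e : E) :
    CellwiseContinuous (uniformMesh (N e) (ℓ e)) (N e) (v e) := fun i hi => by
  obtain ⟨α, β, h⟩ := hv.eqOn_affine e hi
  exact ⟨_, by fun_prop, h⟩

theorem Dx_eq_of_mem_Ioo (v : E → ℝ → ℝ) {e : E} (hℓ : 0 < ℓ e) {i : ℕ} (hi : i < N e)
    {x : ℝ} (hx : x ∈ Ioo (uniformMesh (N e) (ℓ e) i) (uniformMesh (N e) (ℓ e) (i + 1))) :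
    Dx N ℓ v e x = (v e (uniformMesh (N e) (ℓ e) (i + 1)) - v e (uniformMesh (N e) (ℓ e) i))
      * (N e / ℓ e) := by
  have hN : (0 : ℝ) < N e := by exact_mod_cast i.zero_le.trans_lt hi
  have hfloor : ⌊x * N e / ℓ e⌋₊ = i := by
    obtain ⟨hx₁, hx₂⟩ := hx
    simp only [uniformMesh, Nat.cast_add, Nat.cast_one] at hx₁ hx₂
    rw [div_lt_iff₀ hN] at hx₁
    rw [lt_div_iff₀ hN] at hx₂
    have hx₀ : 0 ≤ x := by nlinarith [mul_nonneg (Nat.cast_nonneg (α := ℝ) i) hℓ.le]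
    rw [Nat.floor_eq_iff (by positivity), le_div_iff₀ hℓ, div_lt_iff₀ hℓ]
    constructor <;> nlinarith
  simp only [Dx, hfloor, min_eq_right (Nat.le_sub_one_of_lt hi), uniformMesh, Nat.cast_add,
    Nat.cast_one]

theorem cellwiseConst_Dx (v : E → ℝ → ℝ) {e : E} (hℓ : 0 < ℓ e) :
    CellwiseConst (uniformMesh (N e) (ℓ e)) (N e) (Dx N ℓ v e) := fun _ hi =>
  ⟨_, fun _ hx => Dx_eq_of_mem_Ioo v hℓ hi hx⟩

theorem integral_Dx (v : E → ℝ → ℝ) {e : E} (hN : 0 < N e) (hℓ : 0 < ℓ e) :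
    ∫ x in (0 : ℝ)..ℓ e, Dx N ℓ v e x = v e (ℓ e) - v e 0 := by
  have hmesh := uniformMesh_strictMono hN hℓ
  have hcell : ∀ i < N e, ∫ x in uniformMesh (N e) (ℓ e) i..uniformMesh (N e) (ℓ e) (i + 1),
      Dx N ℓ v e x = v e (uniformMesh (N e) (ℓ e) (i + 1)) - v e (uniformMesh (N e) (ℓ e) i) := by
    intro i hi
    rw [intervalIntegral.integral_congr_Ioo_of_le (hmesh i.lt_succ_self).le
      fun x hx => Dx_eq_of_mem_Ioo v hℓ hi hx, intervalIntegral.integral_const, smul_eq_mul,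
      uniformMesh_succ_sub]
    field_simp
  have := (cellwiseConst_Dx v hℓ).cellwiseContinuous.integral_eq_sum hmesh.monotone
  rw [uniformMesh_zero, uniformMesh_self hN.ne'] at this
  rw [this, Finset.sum_congr rfl fun i hi => hcell i (Finset.mem_range.1 hi),
    Finset.sum_range_sub (fun i => v e (uniformMesh (N e) (ℓ e) i)), uniformMesh_zero,
    uniformMesh_self hN.ne']

theorem IsPwAffine.isQuadraticOn {v : E → ℝ → ℝ} (hv : IsPwAffine N ℓ v) (e : E) {i : ℕ}
    (hi : i < N e) :
    IsQuadraticOn (v e) (Ioo (uniformMesh (N e) (ℓ e) i) (uniformMesh (N e) (ℓ e) (i + 1))) := by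
  obtain ⟨α, β, h⟩ := hv.eqOn_affine e hi
  exact ⟨β, α, 0, fun x hx => by rw [h hx]; ring⟩

end Network

section Density

variable {S : Set ℝ} {t : ℝ}

theorem HasDerivWithinAt.energyDensity {m ρ : ℝ → ℝ} {m' ρ' : ℝ}
    (hm : HasDerivWithinAt m m' S t) (hρ : HasDerivWithinAt ρ ρ' S t) (hρ₀ : ρ t ≠ 0)
    (c γ : ℝ) :
    HasDerivWithinAt (fun τ => m τ ^ 2 / (2 * ρ τ) + c * ρ τ ^ γ / (γ - 1))
      ((1 / ρ t * m' - m t / (2 * ρ t ^ 2) * ρ') * m t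
        + ρ' * (c * γ / (γ - 1) * ρ t ^ (γ - 1))) S t := by
  refine (((hm.fun_pow 2).fun_div (hρ.const_mul 2) (mul_ne_zero two_ne_zero hρ₀)).fun_add
    (((hρ.rpow_const (Or.inl hρ₀)).const_mul c).div_const (γ - 1))).congr_deriv ?_
  simp only [Nat.cast_ofNat, Nat.add_one_sub_one, pow_one]
  field_simp

theorem isQuadraticOn_energyDensity {m ρ : ℝ → ℝ} {s : Set ℝ} {α β r : ℝ}
    (hm : EqOn m (fun x => α * x + β) s) (hρ : EqOn ρ (fun _ => r) s) (c γ : ℝ) :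
    IsQuadraticOn (fun x => m x ^ 2 / (2 * ρ x) + c * ρ x ^ γ / (γ - 1)) s :=
  ⟨β ^ 2 / (2 * r) + c * r ^ γ / (γ - 1), α * β / r, α ^ 2 / (2 * r),
    fun x hx => by simp only [hm hx, hρ hx]; ring⟩

end Density

section EdgeSums

variable {V E : Type} [Fintype E] {ℓ : E → ℝ}

theorem sum_integral_add {f g : E → ℝ → ℝ}
    (hf : ∀ e, IntervalIntegrable (f e) volume 0 (ℓ e))
    (hg : ∀ e, IntervalIntegrable (g e) volume 0 (ℓ e)) :
    ∑ e, ∫ x in 0..ℓ e, (f e x + g e x)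
      = (∑ e, ∫ x in 0..ℓ e, f e x) + ∑ e, ∫ x in 0..ℓ e, g e x := by
  simp only [intervalIntegral.integral_add (hf _) (hg _), Finset.sum_add_distrib]

theorem sum_integral_sub {f g : E → ℝ → ℝ}
    (hf : ∀ e, IntervalIntegrable (f e) volume 0 (ℓ e))
    (hg : ∀ e, IntervalIntegrable (g e) volume 0 (ℓ e)) :
    ∑ e, ∫ x in 0..ℓ e, (f e x - g e x)
      = (∑ e, ∫ x in 0..ℓ e, f e x) - ∑ e, ∫ x in 0..ℓ e, g e x := by
  simp only [intervalIntegral.integral_sub (hf _) (hg _), Finset.sum_sub_distrib]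

theorem sum_sub_eq_zero_of_vtxSum_eq_zero [DecidableEq V] [Fintype V] (src dst : E → V)
    (f : E → ℝ → ℝ) (h : ∀ w, vtxSum src dst ℓ f w = 0) :
    ∑ e, (f e (ℓ e) - f e 0) = 0 := by
  calc ∑ e, (f e (ℓ e) - f e 0) = ∑ w, vtxSum src dst ℓ f w := by
        unfold vtxSum
        rw [Finset.sum_comm]
        refine Finset.sum_congr rfl fun e _ => ?_
        rw [Finset.sum_sub_distrib, Finset.sum_ite_eq, Finset.sum_ite_eq]
        simp
    _ = 0 := Finset.sum_eq_zero fun w _ => h w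

end EdgeSums

section SemiDiscrete

variable {V E : Type} [Fintype V] [Fintype E] [DecidableEq V] {src dst : E → V} {N : E → ℕ}
  {ℓ : E → ℝ} {γ : ℝ} {a b c : E → ℝ}

theorem SemiDiscEqs.sum_integral_ρt_eq_zero {ρ m ρt mt : E → ℝ → ℝ}
    (heq : SemiDiscEqs src dst N ℓ γ a b c ρ m ρt mt) (hm : InVh src dst N ℓ m)
    (hN : ∀ e, 0 < N e) (hℓ : ∀ e, 0 < ℓ e) :
    ∑ e, ∫ x in 0..ℓ e, ρt e x = 0 := by
  have h := heq.1 (fun _ _ => 1) fun _ _ _ _ _ => rfl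
  simp only [pairE, mul_one] at h
  rw [h, Finset.sum_congr rfl fun e _ => integral_Dx m (hN e) (hℓ e), neg_eq_zero]
  exact sum_sub_eq_zero_of_vtxSum_eq_zero src dst m hm.2

theorem SemiDiscEqs.energy_rate_eq_neg_dissipation {ρ m ρt mt : E → ℝ → ℝ}
    (heq : SemiDiscEqs src dst N ℓ γ a b c ρ m ρt mt) (hρ : IsPwConst N ℓ ρ)
    (hm : InVh src dst N ℓ m)
    (hρt : ∀ e, CellwiseContinuous (uniformMesh (N e) (ℓ e)) (N e) (ρt e))
    (hmt : ∀ e, CellwiseContinuous (uniformMesh (N e) (ℓ e)) (N e) (mt e))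
    (hN : ∀ e, 0 < N e) (hℓ : ∀ e, 0 < ℓ e) :
    ∑ e, ∫ x in 0..ℓ e, ((1 / ρ e x * mt e x - m e x / (2 * ρ e x ^ 2) * ρt e x) * m e x
        + ρt e x * (c e * γ / (γ - 1) * ρ e x ^ (γ - 1)))
      = -∑ e, ∫ x in 0..ℓ e,
          (a e * Dx N ℓ m e x ^ 2 / ρ e x ^ 2 + b e * |m e x| ^ 3 / ρ e x ^ 2) := by
  have hint : ∀ {f : E → ℝ → ℝ},
      (∀ e, CellwiseContinuous (uniformMesh (N e) (ℓ e)) (N e) (f e)) →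
      ∀ e, IntervalIntegrable (f e) volume 0 (ℓ e) :=
    fun hf e => (hf e).intervalIntegrable_uniformMesh (hN e) (hℓ e)
  have hρc := hρ.cellwiseConst
  have hmc := hm.1.cellwiseContinuous
  have hDm e := (cellwiseConst_Dx (N := N) m (hℓ e)).cellwiseContinuous
  have hP e := ((hρc e).comp fun r => c e * γ / (γ - 1) * r ^ (γ - 1)).cellwiseContinuous
  have hinertia := hint fun e => ((((hρc e).comp fun r => 1 / r).cellwiseContinuous.mul (hmt e)).sub
    (((hmc e).div ((hρc e).comp fun r => 2 * r ^ 2)).mul (hρt e))).mul (hmc e)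
  have hpressure := hint fun e => (hρt e).mul (hP e)
  have hflux e := (((((hmc e).comp (continuous_pow 2)).div ((hρc e).comp fun r => 2 * r ^ 2)).add
    (hP e)).sub (((hρc e).comp fun r => a e / r ^ 2).cellwiseContinuous.mul (hDm e))).mul (hDm e)
  have hsource e := ((((hmc e).div ((hρc e).comp fun r => 2 * r ^ 2)).mul (hDm e)).add
    ((((hmc e).comp (Φ := fun y => b e * |y|) (by fun_prop)).mul (hmc e)).div
      ((hρc e).comp fun r => r ^ 2))).mul (hmc e)
  calc _ = pairE ℓ (fun e x => (1 / ρ e x) * mt e x - m e x / (2 * ρ e x ^ 2) * ρt e x) m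
        + pairE ℓ ρt (fun e x => c e * γ / (γ - 1) * ρ e x ^ (γ - 1)) :=
        sum_integral_add hinertia hpressure
    _ = pairE ℓ (fun e x => m e x ^ 2 / (2 * ρ e x ^ 2) + c e * γ / (γ - 1) * ρ e x ^ (γ - 1)
            - a e / ρ e x ^ 2 * Dx N ℓ m e x) (Dx N ℓ m)
        - pairE ℓ (fun e x => m e x / (2 * ρ e x ^ 2) * Dx N ℓ m e x
            + b e * |m e x| * m e x / ρ e x ^ 2) m
        - pairE ℓ (Dx N ℓ m) (fun e x => c e * γ / (γ - 1) * ρ e x ^ (γ - 1)) := by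
        rw [heq.2 m hm, heq.1 _ (hρ.comp fun e r => c e * γ / (γ - 1) * r ^ (γ - 1))]
        ring
    _ = _ := by
        simp only [pairE]
        rw [← sum_integral_sub (hint hflux) (hint hsource),
          ← sum_integral_sub (hint fun e => (hflux e).sub (hsource e))
            (hint fun e => (hDm e).mul (hP e)),
          ← Finset.sum_neg_distrib]
        refine Finset.sum_congr rfl fun e _ => ?_
        rw [← intervalIntegral.integral_neg]
        congr 1 with x
        rw [pow_succ' |m e x| 2, sq_abs]
        ring

end SemiDiscrete

namespace IsSemiDiscSol

variable {V E : Type} [Fintype V] [Fintype E] [DecidableEq V] {src dst : E → V} {N : E → ℕ}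
  {ℓ : E → ℝ} {γ : ℝ} {a b c : E → ℝ} {S : Set ℝ} {ρh mh ρht mht : ℝ → E → ℝ → ℝ} {t : ℝ}

theorem hasDerivWithinAt_mass (hsol : IsSemiDiscSol src dst N ℓ γ a b c S ρh mh ρht mht)
    (hS : UniqueDiffWithinAt ℝ S t) (ht : t ∈ S) (hN : ∀ e, 0 < N e) (hℓ : ∀ e, 0 < ℓ e) :
    HasDerivWithinAt (fun s => ∑ e, ∫ x in (0 : ℝ)..(ℓ e), ρh s e x) 0 S t := by
  obtain ⟨hmem, -, hderiv, -, -, heqs⟩ := hsol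
  have h := HasDerivWithinAt.fun_sum fun e (_ : e ∈ Finset.univ) =>
    hasDerivWithinAt_integral_of_uniformMesh (hN e) (hℓ e) hS ht
      (fun τ hτ _ hi => ((hmem τ hτ).1.cellwiseConst e).isQuadraticOn hi)
      fun x _ => (hderiv t ht e x).1
  rwa [(heqs t ht).sum_integral_ρt_eq_zero (hmem t ht).2 hN hℓ] at h

theorem hasDerivWithinAt_energy (hsol : IsSemiDiscSol src dst N ℓ γ a b c S ρh mh ρht mht)
    (hS : UniqueDiffWithinAt ℝ S t) (ht : t ∈ S) (hN : ∀ e, 0 < N e) (hℓ : ∀ e, 0 < ℓ e) :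
    HasDerivWithinAt (fun s => ∑ e, ∫ x in (0 : ℝ)..(ℓ e),
        (mh s e x ^ 2 / (2 * ρh s e x) + c e * ρh s e x ^ γ / (γ - 1)))
      (-(∑ e, ∫ x in (0 : ℝ)..(ℓ e),
          (a e * Dx N ℓ (mh t) e x ^ 2 / ρh t e x ^ 2
            + b e * |mh t e x| ^ 3 / ρh t e x ^ 2))) S t := by
  obtain ⟨hmem, hpos, hderiv, -, -, heqs⟩ := hsol
  have hρt e := CellwiseContinuous.of_hasDerivWithinAt (uniformMesh_strictMono (hN e) (hℓ e)) hS
    ht (fun τ hτ _ hi => ((hmem τ hτ).1.cellwiseConst e).isQuadraticOn hi)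
    fun x => (hderiv t ht e x).1
  have hmt e := CellwiseContinuous.of_hasDerivWithinAt (uniformMesh_strictMono (hN e) (hℓ e)) hS
    ht (fun τ hτ _ hi => (hmem τ hτ).2.1.isQuadraticOn e hi) fun x => (hderiv t ht e x).2
  rw [← (heqs t ht).energy_rate_eq_neg_dissipation (hmem t ht).1 (hmem t ht).2 hρt hmt hN hℓ]
  refine HasDerivWithinAt.fun_sum fun e _ => hasDerivWithinAt_integral_of_uniformMesh (hN e)
    (hℓ e) hS ht (fun τ hτ i hi => ?_) fun x hx => ?_
  · obtain ⟨α, β, hαβ⟩ := (hmem τ hτ).2.1.eqOn_affine e hi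
    obtain ⟨r, hr⟩ := (hmem τ hτ).1.cellwiseConst e i hi
    exact isQuadraticOn_energyDensity hαβ hr (c e) γ
  · exact (hderiv t ht e x).2.energyDensity (hderiv t ht e x).1
      (hpos t ht e x (Ioo_subset_Icc_self hx)).ne' (c e) γ

end IsSemiDiscSol

theorem hasDerivWithinAt_singleton_self (f : ℝ → ℝ) (f' x : ℝ) : HasDerivWithinAt f f' {x} x :=
  HasFDerivWithinAt.of_not_accPt (by rw [accPt_principal_iff_nhdsWithin]; simp)

theorem semidiscrete_balance_of_mass_and_energy_general
    {V E : Type} [Fintype V] [Fintype E] [DecidableEq V]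
    (src dst : E → V) (N : E → ℕ) (hN : ∀ e, 1 ≤ N e)
    (ℓ : E → ℝ) (hℓ : ∀ e, 0 < ℓ e)
    (γ : ℝ) (a b c : E → ℝ)
    (T : ℝ)
    (ρh mh ρht mht : ℝ → E → ℝ → ℝ)
    (hsol : IsSemiDiscSol src dst N ℓ γ a b c (Set.Icc 0 T) ρh mh ρht mht)
    (t : ℝ) (ht : t ∈ Set.Icc 0 T) :
    HasDerivWithinAt (fun s => ∑ e, ∫ x in (0 : ℝ)..(ℓ e), ρh s e x)
      0 (Set.Icc 0 T) t ∧
    HasDerivWithinAt (fun s => ∑ e, ∫ x in (0 : ℝ)..(ℓ e),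
        (mh s e x ^ 2 / (2 * ρh s e x) + c e * ρh s e x ^ γ / (γ - 1)))
      (-(∑ e, ∫ x in (0 : ℝ)..(ℓ e),
          (a e * Dx N ℓ (mh t) e x ^ 2 / ρh t e x ^ 2
            + b e * |mh t e x| ^ 3 / ρh t e x ^ 2)))
      (Set.Icc 0 T) t := by
  rcases (ht.1.trans ht.2).eq_or_lt with rfl | hTpos
  · obtain rfl : t = 0 := le_antisymm ht.2 ht.1
    rw [Icc_self]
    exact ⟨hasDerivWithinAt_singleton_self _ _ _, hasDerivWithinAt_singleton_self _ _ _⟩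
  have hS := uniqueDiffOn_Icc hTpos t ht
  exact ⟨hsol.hasDerivWithinAt_mass hS ht hN hℓ, hsol.hasDerivWithinAt_energy hS ht hN hℓ⟩

/-- **Balance of mass and energy for the semi-discretization (Lemma 4.3).**
Let `(ρh, mh)` be a semi-discrete solution on `[0,T]`.  Then for every `t ∈ [0,T]`:
`d/dt Σ_e ∫_0^{ℓ_e} ρ_h dx = 0`, and
`d/dt Σ_e ∫_0^{ℓ_e} ( m_h²/(2ρ_h) + P(ρ_h) ) dx
   + Σ_e ∫_0^{ℓ_e} ( a_e |∂ₓ m_h|²/ρ_h² + b_e |m_h|³/ρ_h² ) dx = 0`,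
with `P_e(ρ) = c_e ρ^γ/(γ-1)` on edge `e`. -/
theorem semidiscrete_balance_of_mass_and_energy
    {V E : Type} [Fintype V] [Fintype E] [DecidableEq V]
    (src dst : E → V) (N : E → ℕ) (hN : ∀ e, 1 ≤ N e)
    (ℓ : E → ℝ) (hℓ : ∀ e, 0 < ℓ e)
    (γ : ℝ) (hγ : 1 < γ) (a b c : E → ℝ)
    (ha : ∀ e, 0 ≤ a e) (hb : ∀ e, 0 ≤ b e) (hc : ∀ e, 0 < c e)
    (T : ℝ) (hT : 0 ≤ T)
    (ρh mh ρht mht : ℝ → E → ℝ → ℝ)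
    (hsol : IsSemiDiscSol src dst N ℓ γ a b c (Set.Icc 0 T) ρh mh ρht mht)
    (t : ℝ) (ht : t ∈ Set.Icc 0 T) :
    HasDerivWithinAt (fun s => ∑ e, ∫ x in (0 : ℝ)..(ℓ e), ρh s e x)
      0 (Set.Icc 0 T) t ∧
    HasDerivWithinAt (fun s => ∑ e, ∫ x in (0 : ℝ)..(ℓ e),
        (mh s e x ^ 2 / (2 * ρh s e x) + c e * ρh s e x ^ γ / (γ - 1)))
      (-(∑ e, ∫ x in (0 : ℝ)..(ℓ e),
          (a e * Dx N ℓ (mh t) e x ^ 2 / ρh t e x ^ 2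
            + b e * |mh t e x| ^ 3 / ρh t e x ^ 2)))
      (Set.Icc 0 T) t :=
  semidiscrete_balance_of_mass_and_energy_general src dst N hN ℓ hℓ γ a b c T ρh mh ρht mht hsol t
    ht
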